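/- Let a, b ∈ Δₙ be strictly positive probability vectors, C ∈ ℝ₊^{n×n}, γ > 0, K := exp(−C/γ). Let (f_k, g_k) be the Sinkhorn iterates started from arbitrary f₀, g₀ ∈ ℝⁿ and let (f*, g*) be any dual optimal solution. Then for every k ≥ 3, h(f*, g*) − h(f_k, g_k) ≤ 2‖C‖_∞² / (γ(k − 2)). -/

import Mathlib

/-!
Along the iterates the dual gap `δₖ = h(f*, g*) − h(fₖ, gₖ)` is nonnegative, and after every
update one marginal of the plan is exact. When the column sums are `b` and `r` are the row sums,
concavity of `h`, together with the fact that two `f`-updates differ by a constant up to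
`‖C‖_∞`, gives `δ ≤ ‖C‖_∞ ‖a − r‖₁`; the next row update raises `h` by
`γ KL(a ‖ r) ≥ γ ‖a − r‖₁² / 2` (Pinsker). Hence `δₖ² ≤ (2‖C‖_∞² / γ)(δₖ − δₖ₊₁)`, so `1 / δₖ`
grows at least linearly. Odd steps are even steps of the transposed problem.
-/

/-- The dual entropic OT objective
`h(f,g) = ⟨f,a⟩ + ⟨g,b⟩ − γ Σ_{i,j} exp((f_i + g_j − C_{ij})/γ)`. -/
noncomputable def dualObj {n : ℕ} (a b : Fin n → ℝ) (C : Matrix (Fin n) (Fin n) ℝ)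
    (γ : ℝ) (f g : Fin n → ℝ) : ℝ :=
  (∑ i, f i * a i) + (∑ j, g j * b j) -
    γ * ∑ i, ∑ j, Real.exp ((f i + g j - C i j) / γ)

/-- The transport plan `P = diag(e^{f/γ}) K diag(e^{g/γ})` with `K = exp(−C/γ)`. -/
noncomputable def plan {n : ℕ} (C : Matrix (Fin n) (Fin n) ℝ) (γ : ℝ)
    (f g : Fin n → ℝ) : Matrix (Fin n) (Fin n) ℝ :=
  fun i j => Real.exp (f i / γ) * Real.exp (-C i j / γ) * Real.exp (g j / γ)

/-- `(f k, g k)` is the sequence of Sinkhorn iterates (in dual form): for even `k`,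
`f (k+1) = γ log a − γ log (K e^{g k / γ})` and `g (k+1) = g k`; for odd `k`,
`f (k+1) = f k` and `g (k+1) = γ log b − γ log (Kᵀ e^{f k / γ})`,
where `K = exp(−C/γ)`. -/
def SinkhornSeq {n : ℕ} (a b : Fin n → ℝ) (C : Matrix (Fin n) (Fin n) ℝ) (γ : ℝ)
    (f g : ℕ → Fin n → ℝ) : Prop :=
  ∀ k : ℕ,
    (Even k →
      f (k+1) = (fun i => γ * Real.log (a i) -
        γ * Real.log (∑ j, Real.exp (-C i j / γ) * Real.exp (g k j / γ))) ∧
      g (k+1) = g k) ∧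
    (¬ Even k →
      f (k+1) = f k ∧
      g (k+1) = (fun j => γ * Real.log (b j) -
        γ * Real.log (∑ i, Real.exp (-C i j / γ) * Real.exp (f k i / γ))))

open Real Set
open scoped Matrix

namespace Real

/-- Its nonnegativity sharpens `t log t − t + 1 ≥ 0`; combined with Cauchy–Schwarz against the
weights `p + 2q` it gives Pinsker's inequality. -/
noncomputable def pinskerDefect (t : ℝ) : ℝ := t * log t - t + 1 - 3 * (t - 1) ^ 2 / (2 * (t + 2))

noncomputable def pinskerDefectDeriv (t : ℝ) : ℝ :=
  log t - 3 * (t - 1) * (t + 5) / (2 * (t + 2) ^ 2)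

lemma hasDerivAt_pinskerDefect {t : ℝ} (ht : 0 < t) :
    HasDerivAt pinskerDefect (pinskerDefectDeriv t) t := by
  have h2 : t + 2 ≠ 0 := by positivity
  have hq : HasDerivAt (fun t : ℝ => 3 * (t - 1) ^ 2) (3 * (2 * (t - 1))) t := by
    simpa using (((hasDerivAt_id t).sub_const 1).pow 2).const_mul 3
  have hd : HasDerivAt (fun t : ℝ => 2 * (t + 2)) 2 t := by
    simpa using ((hasDerivAt_id t).add_const 2).const_mul 2
  refine (((((hasDerivAt_id t).mul (hasDerivAt_log ht.ne')).sub (hasDerivAt_id t)).add_const 1).sub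
    (hq.div hd (by positivity))).congr_deriv ?_
  simp only [pinskerDefectDeriv, id]
  field_simp
  ring

lemma hasDerivAt_pinskerDefectDeriv {t : ℝ} (ht : 0 < t) :
    HasDerivAt pinskerDefectDeriv (1 / t - 27 / (t + 2) ^ 3) t := by
  have h2 : t + 2 ≠ 0 := by positivity
  have hq : HasDerivAt (fun t : ℝ => 3 * (t - 1) * (t + 5)) (3 * (t + 5) + 3 * (t - 1)) t := by
    refine ((((hasDerivAt_id t).sub_const 1).const_mul 3).mul
      ((hasDerivAt_id t).add_const 5)).congr_deriv ?_
    simp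
  have hd : HasDerivAt (fun t : ℝ => 2 * (t + 2) ^ 2) (2 * (2 * (t + 2))) t := by
    simpa using (((hasDerivAt_id t).add_const 2).pow 2).const_mul 2
  refine ((hasDerivAt_log ht.ne').sub (hq.div hd (by positivity))).congr_deriv ?_
  field_simp
  ring

lemma monotoneOn_pinskerDefectDeriv : MonotoneOn pinskerDefectDeriv (Ioi 0) := by
  refine monotoneOn_of_hasDerivWithinAt_nonneg (f' := fun t => 1 / t - 27 / (t + 2) ^ 3)
    (convex_Ioi 0)
    (fun t ht => (hasDerivAt_pinskerDefectDeriv ht).continuousAt.continuousWithinAt)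
    (fun t ht => ?_) (fun t ht => ?_) <;> rw [interior_Ioi, mem_Ioi] at ht
  · exact (hasDerivAt_pinskerDefectDeriv ht).hasDerivWithinAt
  · -- AM-GM: `(t + 2)³ = (t + 1 + 1)³ ≥ 27 t`
    rw [sub_nonneg, div_le_div_iff₀ (by positivity) ht]
    nlinarith [sq_nonneg (t - 1), ht.le]

lemma pinskerDefect_nonneg {t : ℝ} (ht : 0 < t) : 0 ≤ pinskerDefect t := by
  have hmin : IsMinOn pinskerDefect (Ioi 0) 1 := by
    have hderiv : ∀ s ∈ Ioi (0 : ℝ), deriv pinskerDefect s = pinskerDefectDeriv s :=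
      fun s hs => (hasDerivAt_pinskerDefect hs).deriv
    have hone : pinskerDefectDeriv 1 = 0 := by simp [pinskerDefectDeriv]
    refine isMinOn_Ioi_of_deriv (hasDerivAt_pinskerDefect one_pos).continuousAt
      (fun s hs => (hasDerivAt_pinskerDefect hs.1).differentiableAt.differentiableWithinAt)
      (fun s hs =>
        (hasDerivAt_pinskerDefect (one_pos.trans hs)).differentiableAt.differentiableWithinAt)
      (fun s hs => ?_) (fun s hs => ?_)
    · rw [hderiv s hs.1, ← hone]
      exact monotoneOn_pinskerDefectDeriv hs.1 (mem_Ioi.2 one_pos) hs.2.le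
    · rw [hderiv s (mem_Ioi.2 (one_pos.trans hs)), ← hone]
      exact monotoneOn_pinskerDefectDeriv (mem_Ioi.2 one_pos) (mem_Ioi.2 (one_pos.trans hs)) hs.le
  simpa [pinskerDefect] using hmin ht

lemma three_mul_sq_div_le_mul_log_div {x y : ℝ} (hx : 0 < x) (hy : 0 < y) :
    3 * (x - y) ^ 2 / (2 * (x + 2 * y)) ≤ x * log (x / y) - x + y := by
  have h := mul_nonneg (pinskerDefect_nonneg (div_pos hx hy)) hy.le
  have hxy : x + 2 * y ≠ 0 := by positivity
  have : pinskerDefect (x / y) * y =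
      x * log (x / y) - x + y - 3 * (x - y) ^ 2 / (2 * (x + 2 * y)) := by
    simp only [pinskerDefect]
    field_simp
  linarith

end Real

/-- Pinsker's inequality. -/
theorem sq_sum_abs_sub_le_two_mul_sum_mul_log {ι : Type*} [Fintype ι] {p q : ι → ℝ}
    (hp : ∀ i, 0 < p i) (hq : ∀ i, 0 < q i) (hp1 : ∑ i, p i = 1) (hq1 : ∑ i, q i = 1) :
    (∑ i, |p i - q i|) ^ 2 ≤ 2 * ∑ i, p i * log (p i / q i) := by
  have hw : ∀ i, 0 < p i + 2 * q i := fun i => by linarith [hp i, hq i]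
  have hmass : ∑ i, (p i + 2 * q i) = 3 := by
    rw [Finset.sum_add_distrib, ← Finset.mul_sum, hp1, hq1]; norm_num
  have hcs := Finset.sq_sum_div_le_sum_sq_div Finset.univ (fun i => |p i - q i|)
    (fun i _ => hw i)
  have hkl : ∑ i, p i * log (p i / q i) = ∑ i, (p i * log (p i / q i) - p i + q i) := by
    simp only [Finset.sum_add_distrib, Finset.sum_sub_distrib, hp1, hq1, sub_add_cancel]
  have hpt : ∑ i, |p i - q i| ^ 2 / (p i + 2 * q i) ≤ 2 / 3 * ∑ i, p i * log (p i / q i) := by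
    rw [hkl, Finset.mul_sum]
    refine Finset.sum_le_sum fun i _ => ?_
    have := Real.three_mul_sq_div_le_mul_log_div (hp i) (hq i)
    rw [sq_abs, div_le_iff₀ (hw i)]
    rw [div_le_iff₀ (by linarith [hw i])] at this
    nlinarith [hw i]
  rw [hmass] at hcs
  linarith

lemma mul_log_sum_exp_mem_Icc {ι : Type*} [Fintype ι] [Nonempty ι] {γ R : ℝ} (hγ : 0 < γ)
    {c : ι → ℝ} (hc0 : ∀ j, 0 ≤ c j) (hcR : ∀ j, c j ≤ R) (w : ι → ℝ) :
    γ * log (∑ j, exp (-c j / γ) * exp (w j / γ)) ∈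
      Icc (γ * log (∑ j, exp (w j / γ)) - R) (γ * log (∑ j, exp (w j / γ))) := by
  have hZ : 0 < ∑ j, exp (w j / γ) := Finset.sum_pos (fun j _ => exp_pos _) Finset.univ_nonempty
  have hlower : exp (-R / γ) * ∑ j, exp (w j / γ) ≤ ∑ j, exp (-c j / γ) * exp (w j / γ) := by
    rw [Finset.mul_sum]
    gcongr with j
    linarith [hcR j]
  have hupper : ∑ j, exp (-c j / γ) * exp (w j / γ) ≤ ∑ j, exp (w j / γ) := by
    refine Finset.sum_le_sum fun j _ => mul_le_of_le_one_left (exp_pos _).le ?_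
    rw [exp_le_one_iff]
    exact div_nonpos_of_nonpos_of_nonneg (by linarith [hc0 j]) hγ.le
  have hlog := log_le_log (by positivity) hlower
  rw [log_mul (exp_pos _).ne' hZ.ne', log_exp] at hlog
  constructor
  · have := mul_le_mul_of_nonneg_left hlog hγ.le
    rw [mul_add, mul_div_cancel₀ _ hγ.ne'] at this
    linarith
  · exact mul_le_mul_of_nonneg_left (log_le_log (by positivity) hupper) hγ.le

lemma sum_mul_le_mul_sum_abs_of_sum_eq_zero {ι : Type*} [Fintype ι] {u v : ι → ℝ} {c R : ℝ}
    (hv : ∑ i, v i = 0) (hu : ∀ i, |u i - c| ≤ R) : ∑ i, u i * v i ≤ R * ∑ i, |v i| := by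
  have hshift : ∑ i, u i * v i = ∑ i, (u i - c) * v i := by
    simp only [sub_mul, Finset.sum_sub_distrib, ← Finset.mul_sum, hv, mul_zero, sub_zero]
  rw [hshift, Finset.mul_sum]
  refine Finset.sum_le_sum fun i _ => ?_
  calc (u i - c) * v i ≤ |u i - c| * |v i| := by rw [← abs_mul]; exact le_abs_self _
    _ ≤ R * |v i| := mul_le_mul_of_nonneg_right (hu i) (abs_nonneg _)

lemma le_div_of_sq_le_mul_sub {δ : ℕ → ℝ} {c : ℝ} (hc : 0 ≤ c)
    (h : ∀ m, δ m ^ 2 ≤ c * (δ m - δ (m + 1))) (m : ℕ) : δ (m + 1) ≤ c / (m + 1) := by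
  rcases le_or_gt (δ (m + 1)) 0 with hle | hpos
  · exact hle.trans (by positivity)
  have hc : 0 < c := by
    refine hc.lt_of_ne fun hc0 => ?_
    have := h (m + 1)
    rw [← hc0, zero_mul] at this
    nlinarith
  have hanti : ∀ m, δ (m + 1) ≤ δ m := fun m => by
    have := (sq_nonneg (δ m)).trans (h m)
    nlinarith
  -- `1 / δ` grows by at least `1 / c` per step, as long as `δ` stays positive
  have hinv : ∀ m, 0 < δ m → m / c ≤ 1 / δ m := by
    intro m
    induction m with
    | zero => intro h0; simp only [CharP.cast_eq_zero, zero_div]; positivity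
    | succ m ih =>
      intro hm1
      have hm : 0 < δ m := hm1.trans_le (hanti m)
      have hstep : 1 / δ m + 1 / c ≤ 1 / δ (m + 1) := by
        rw [div_add_div _ _ hm.ne' hc.ne', div_le_div_iff₀ (by positivity) hm1]
        nlinarith [h m, hanti m]
      push_cast
      rw [add_div]
      linarith [ih hm]
  have := hinv (m + 1) hpos
  rw [div_le_div_iff₀ hc hpos] at this
  rw [le_div_iff₀ (by positivity)]
  push_cast at this
  linarith

/-- The update of `g` against `f` is `sinkhornUpdate b Cᵀ γ f`. -/
noncomputable def sinkhornUpdate {n : ℕ} (a : Fin n → ℝ) (C : Matrix (Fin n) (Fin n) ℝ) (γ : ℝ)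
    (g : Fin n → ℝ) : Fin n → ℝ :=
  fun i => γ * Real.log (a i) - γ * Real.log (∑ j, Real.exp (-C i j / γ) * Real.exp (g j / γ))

section Sinkhorn

variable {n : ℕ} {a b : Fin n → ℝ} {C : Matrix (Fin n) (Fin n) ℝ} {γ R : ℝ} {fs gs : Fin n → ℝ}

lemma plan_transpose (C : Matrix (Fin n) (Fin n) ℝ) (γ : ℝ) (f g : Fin n → ℝ) :
    plan Cᵀ γ g f = (plan C γ f g)ᵀ := by
  ext i j
  simp only [plan, Matrix.transpose_apply]
  ring

lemma plan_apply_eq_exp (hγ : γ ≠ 0) (f g : Fin n → ℝ) (i j : Fin n) :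
    plan C γ f g i j = exp ((f i + g j - C i j) / γ) := by
  simp only [plan, ← exp_add]
  congr 1
  field_simp
  ring

lemma plan_pos (f g : Fin n → ℝ) (i j : Fin n) : 0 < plan C γ f g i j := by
  unfold plan
  positivity

lemma dualObj_eq_sum_plan (hγ : γ ≠ 0) (f g : Fin n → ℝ) :
    dualObj a b C γ f g =
      ∑ i, f i * a i + ∑ j, g j * b j - γ * ∑ i, ∑ j, plan C γ f g i j := by
  simp only [dualObj, plan_apply_eq_exp hγ]

lemma dualObj_transpose (f g : Fin n → ℝ) : dualObj b a Cᵀ γ g f = dualObj a b C γ f g := by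
  simp only [dualObj, Matrix.transpose_apply, add_comm (g _)]
  rw [Finset.sum_comm (f := fun j i => exp ((f i + g j - C i j) / γ))]
  ring

lemma SinkhornSeq.transpose {f g : ℕ → Fin n → ℝ} (h : SinkhornSeq a b C γ f g) :
    SinkhornSeq b a Cᵀ γ (fun k => g (k + 1)) (fun k => f (k + 1)) := by
  intro k
  refine ⟨fun hk => ?_, fun hk => ?_⟩
  · obtain ⟨hf, hg⟩ := (h (k + 1)).2 (Nat.not_even_iff_odd.2 hk.add_one)
    exact ⟨hg, hf⟩
  · obtain ⟨hf, hg⟩ := (h (k + 1)).1 (Nat.even_add_one.2 hk)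
    exact ⟨hg, hf⟩

lemma sum_plan_eq_exp_mul (f g : Fin n → ℝ) (i : Fin n) :
    ∑ j, plan C γ f g i j = exp (f i / γ) * ∑ j, exp (-C i j / γ) * exp (g j / γ) := by
  simp only [plan, Finset.mul_sum, mul_assoc]

lemma sum_plan_sinkhornUpdate (hγ : γ ≠ 0) (ha : ∀ i, 0 < a i) (g : Fin n → ℝ) (i : Fin n) :
    ∑ j, plan C γ (sinkhornUpdate a C γ g) g i j = a i := by
  have : Nonempty (Fin n) := ⟨i⟩
  have hS : 0 < ∑ j, exp (-C i j / γ) * exp (g j / γ) :=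
    Finset.sum_pos (fun j _ => by positivity) Finset.univ_nonempty
  have hexp : (γ * log (a i) - γ * log (∑ j, exp (-C i j / γ) * exp (g j / γ))) / γ =
      log (a i) - log (∑ j, exp (-C i j / γ) * exp (g j / γ)) := by
    field_simp
  rw [sum_plan_eq_exp_mul, sinkhornUpdate, hexp, exp_sub, exp_log (ha i), exp_log hS,
    div_mul_cancel₀ _ hS.ne']

lemma sum_plan_sinkhornUpdate_transpose (hγ : γ ≠ 0) (hb : ∀ j, 0 < b j) (f : Fin n → ℝ)
    (j : Fin n) : ∑ i, plan C γ f (sinkhornUpdate b Cᵀ γ f) i j = b j := by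
  simpa only [plan_transpose, Matrix.transpose_apply] using
    sum_plan_sinkhornUpdate (C := Cᵀ) hγ hb f j

lemma sinkhornUpdate_sub (hγ : γ ≠ 0) (ha : ∀ i, 0 < a i) (f g : Fin n → ℝ) (i : Fin n) :
    sinkhornUpdate a C γ g i - f i = γ * log (a i / ∑ j, plan C γ f g i j) := by
  have : Nonempty (Fin n) := ⟨i⟩
  have hS : 0 < ∑ j, exp (-C i j / γ) * exp (g j / γ) :=
    Finset.sum_pos (fun j _ => by positivity) Finset.univ_nonempty
  rw [sum_plan_eq_exp_mul, log_div (ha i).ne' (by positivity), log_mul (exp_pos _).ne' hS.ne',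
    log_exp, sinkhornUpdate]
  field_simp
  ring

lemma eq_sinkhornUpdate_of_sum_plan (hγ : γ ≠ 0) (ha : ∀ i, 0 < a i) {f g : Fin n → ℝ}
    (h : ∀ i, ∑ j, plan C γ f g i j = a i) : f = sinkhornUpdate a C γ g := by
  funext i
  have := sinkhornUpdate_sub (C := C) hγ ha f g i
  rw [h i, div_self (ha i).ne', log_one, mul_zero] at this
  linarith

lemma dualObj_sinkhornUpdate_sub (hγ : γ ≠ 0) (ha : ∀ i, 0 < a i) (f g : Fin n → ℝ) :
    dualObj a b C γ (sinkhornUpdate a C γ g) g - dualObj a b C γ f g =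
      γ * ∑ i, a i * log (a i / ∑ j, plan C γ f g i j) +
        γ * (∑ i, ∑ j, plan C γ f g i j - ∑ i, a i) := by
  have hrow : ∑ i, sinkhornUpdate a C γ g i * a i - ∑ i, f i * a i =
      γ * ∑ i, a i * log (a i / ∑ j, plan C γ f g i j) := by
    rw [← Finset.sum_sub_distrib, Finset.mul_sum]
    refine Finset.sum_congr rfl fun i _ => ?_
    rw [← sub_mul, sinkhornUpdate_sub hγ ha]
    ring
  simp only [dualObj_eq_sum_plan hγ, sum_plan_sinkhornUpdate hγ ha]
  linarith

/-- Concavity of the dual objective: it lies below its tangent plane at `(f, g)`, whose gradient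
is the marginal defect `(a − P 1, b − Pᵀ 1)`. -/
lemma dualObj_sub_le (hγ : 0 < γ) (f g f' g' : Fin n → ℝ) :
    dualObj a b C γ f' g' - dualObj a b C γ f g ≤
      ∑ i, (f' i - f i) * (a i - ∑ j, plan C γ f g i j) +
        ∑ j, (g' j - g j) * (b j - ∑ i, plan C γ f g i j) := by
  have hentry : ∀ i j, plan C γ f g i j * ((f' i - f i) + (g' j - g j)) ≤
      γ * (plan C γ f' g' i j - plan C γ f g i j) := by
    intro i j
    have hP : plan C γ f' g' i j = plan C γ f g i j * exp ((f' i - f i + (g' j - g j)) / γ) := by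
      rw [plan_apply_eq_exp hγ.ne', plan_apply_eq_exp hγ.ne', ← exp_add]
      congr 1
      ring
    have := add_one_le_exp ((f' i - f i + (g' j - g j)) / γ)
    rw [hP, ← mul_sub_one, mul_left_comm]
    refine mul_le_mul_of_nonneg_left ?_ (plan_pos f g i j).le
    rw [← div_le_iff₀' hγ]
    linarith
  have hpair : ∑ i, ∑ j, plan C γ f g i j * ((f' i - f i) + (g' j - g j)) =
      ∑ i, (f' i - f i) * ∑ j, plan C γ f g i j + ∑ j, (g' j - g j) * ∑ i, plan C γ f g i j := by
    have hcol : ∑ j, (g' j - g j) * ∑ i, plan C γ f g i j =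
        ∑ i, ∑ j, plan C γ f g i j * (g' j - g j) := by
      rw [Finset.sum_comm]
      simp only [Finset.mul_sum, mul_comm]
    rw [hcol]
    simp only [mul_add, Finset.sum_add_distrib, add_left_inj, Finset.mul_sum]
    exact Finset.sum_congr rfl fun i _ => Finset.sum_congr rfl fun j _ => mul_comm _ _
  have hexpand : ∑ i, (f' i - f i) * (a i - ∑ j, plan C γ f g i j) +
      ∑ j, (g' j - g j) * (b j - ∑ i, plan C γ f g i j) =
      ∑ i, (f' i - f i) * a i + ∑ j, (g' j - g j) * b j -
        ∑ i, ∑ j, plan C γ f g i j * ((f' i - f i) + (g' j - g j)) := by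
    rw [hpair]
    simp only [mul_sub, Finset.sum_sub_distrib]
    ring
  have hsum := Finset.sum_le_sum fun i (_ : i ∈ Finset.univ) =>
    Finset.sum_le_sum fun j (_ : j ∈ Finset.univ) => hentry i j
  simp only [← Finset.mul_sum, Finset.sum_sub_distrib] at hsum
  rw [hexpand, dualObj_eq_sum_plan hγ.ne', dualObj_eq_sum_plan hγ.ne']
  simp only [sub_mul, Finset.sum_sub_distrib]
  linarith

lemma dualObj_le_of_sum_plan (hγ : 0 < γ)
    (hfs : ∀ i, ∑ j, plan C γ fs gs i j = a i) (hgs : ∀ j, ∑ i, plan C γ fs gs i j = b j)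
    (f g : Fin n → ℝ) : dualObj a b C γ f g ≤ dualObj a b C γ fs gs := by
  have := dualObj_sub_le (a := a) (b := b) (C := C) hγ fs gs f g
  simp only [hfs, hgs, sub_self, mul_zero, Finset.sum_const_zero, add_zero] at this
  linarith

/-- The cost enters `sinkhornUpdate a C γ g i` only through
`γ log Σⱼ e^{-C i j / γ} e^{g j / γ}`, which lies within `R` below `γ log Σⱼ e^{g j / γ}`. -/
lemma exists_abs_sinkhornUpdate_sub_sub_le (hγ : 0 < γ) (hC : ∀ i j, 0 ≤ C i j)
    (hR : ∀ i j, C i j ≤ R) (g g' : Fin n → ℝ) :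
    ∃ c, ∀ i, |sinkhornUpdate a C γ g i - sinkhornUpdate a C γ g' i - c| ≤ R := by
  refine ⟨γ * log (∑ j, exp (g' j / γ)) - γ * log (∑ j, exp (g j / γ)), fun i => ?_⟩
  have : Nonempty (Fin n) := ⟨i⟩
  obtain ⟨h₁, h₂⟩ := mul_log_sum_exp_mem_Icc hγ (hC i) (hR i) g
  obtain ⟨h₁', h₂'⟩ := mul_log_sum_exp_mem_Icc hγ (hC i) (hR i) g'
  rw [abs_le]
  constructor <;> simp only [sinkhornUpdate] <;> linarith

lemma sum_sum_plan_of_sum_plan_col {f g : Fin n → ℝ} (hcol : ∀ j, ∑ i, plan C γ f g i j = b j) :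
    ∑ i, ∑ j, plan C γ f g i j = ∑ j, b j :=
  Finset.sum_comm.trans (Finset.sum_congr rfl fun j _ => hcol j)

lemma dualObj_gap_le_mul_sum_abs (hγ : 0 < γ) (hC : ∀ i j, 0 ≤ C i j) (hR : ∀ i j, C i j ≤ R)
    (ha : ∀ i, 0 < a i) (hab : ∑ i, a i = ∑ j, b j)
    (hfs : ∀ i, ∑ j, plan C γ fs gs i j = a i)
    {g' g : Fin n → ℝ} (hcol : ∀ j, ∑ i, plan C γ (sinkhornUpdate a C γ g') g i j = b j) :
    dualObj a b C γ fs gs - dualObj a b C γ (sinkhornUpdate a C γ g') g ≤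
      R * ∑ i, |a i - ∑ j, plan C γ (sinkhornUpdate a C γ g') g i j| := by
  set f := sinkhornUpdate a C γ g'
  have hmass : ∑ i, (a i - ∑ j, plan C γ f g i j) = 0 := by
    rw [Finset.sum_sub_distrib, sum_sum_plan_of_sum_plan_col hcol, hab, sub_self]
  have hfs' : fs = sinkhornUpdate a C γ gs := eq_sinkhornUpdate_of_sum_plan hγ.ne' ha hfs
  obtain ⟨c, hc⟩ := exists_abs_sinkhornUpdate_sub_sub_le (a := a) hγ hC hR gs g'
  have hconcave := dualObj_sub_le (a := a) (b := b) (C := C) hγ f g fs gs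
  simp only [hcol, sub_self, mul_zero, Finset.sum_const_zero, add_zero] at hconcave
  exact hconcave.trans
    (sum_mul_le_mul_sum_abs_of_sum_eq_zero hmass fun i => by rw [hfs']; exact hc i)

lemma mul_sq_sum_abs_le_dualObj_sinkhornUpdate_sub (hγ : 0 < γ) (ha : ∀ i, 0 < a i)
    (ha1 : ∑ i, a i = 1) (hb1 : ∑ j, b j = 1) {f g : Fin n → ℝ}
    (hcol : ∀ j, ∑ i, plan C γ f g i j = b j) :
    γ / 2 * (∑ i, |a i - ∑ j, plan C γ f g i j|) ^ 2 ≤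
      dualObj a b C γ (sinkhornUpdate a C γ g) g - dualObj a b C γ f g := by
  have hmass : ∑ i, ∑ j, plan C γ f g i j = 1 := (sum_sum_plan_of_sum_plan_col hcol).trans hb1
  have hrow : ∀ i, 0 < ∑ j, plan C γ f g i j := fun i =>
    have : Nonempty (Fin n) := ⟨i⟩
    Finset.sum_pos (fun j _ => plan_pos f g i j) Finset.univ_nonempty
  rw [dualObj_sinkhornUpdate_sub hγ.ne' ha, hmass, ha1, sub_self, mul_zero, add_zero]
  have := mul_le_mul_of_nonneg_left (sq_sum_abs_sub_le_two_mul_sum_mul_log ha hrow ha1 hmass)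
    (by positivity : 0 ≤ γ / 2)
  linarith

lemma sq_dualObj_gap_le (hγ : 0 < γ) (hC : ∀ i j, 0 ≤ C i j) (hR : ∀ i j, C i j ≤ R)
    (ha : ∀ i, 0 < a i) (ha1 : ∑ i, a i = 1) (hb1 : ∑ j, b j = 1)
    (hfs : ∀ i, ∑ j, plan C γ fs gs i j = a i) (hgs : ∀ j, ∑ i, plan C γ fs gs i j = b j)
    {g' g : Fin n → ℝ} (hcol : ∀ j, ∑ i, plan C γ (sinkhornUpdate a C γ g') g i j = b j) :
    (dualObj a b C γ fs gs - dualObj a b C γ (sinkhornUpdate a C γ g') g) ^ 2 ≤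
      2 * R ^ 2 / γ *
        ((dualObj a b C γ fs gs - dualObj a b C γ (sinkhornUpdate a C γ g') g) -
          (dualObj a b C γ fs gs - dualObj a b C γ (sinkhornUpdate a C γ g) g)) := by
  set f := sinkhornUpdate a C γ g'
  set t := ∑ i, |a i - ∑ j, plan C γ f g i j|
  have hgap_nonneg : 0 ≤ dualObj a b C γ fs gs - dualObj a b C γ f g :=
    sub_nonneg.2 (dualObj_le_of_sum_plan hγ hfs hgs f g)
  have hgap : dualObj a b C γ fs gs - dualObj a b C γ f g ≤ R * t :=
    dualObj_gap_le_mul_sum_abs hγ hC hR ha (ha1.trans hb1.symm) hfs hcol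
  have hgain := mul_sq_sum_abs_le_dualObj_sinkhornUpdate_sub hγ ha ha1 hb1 hcol
  calc (dualObj a b C γ fs gs - dualObj a b C γ f g) ^ 2 ≤ (R * t) ^ 2 :=
        pow_le_pow_left₀ hgap_nonneg hgap 2
    _ = 2 * R ^ 2 / γ * (γ / 2 * t ^ 2) := by field_simp
    _ ≤ _ := by gcongr; linarith

lemma SinkhornSeq.sq_gap_le_of_even {f g : ℕ → Fin n → ℝ} (hiter : SinkhornSeq a b C γ f g)
    (hγ : 0 < γ) (hC : ∀ i j, 0 ≤ C i j) (hR : ∀ i j, C i j ≤ R)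
    (ha0 : ∀ i, 0 < a i) (hb0 : ∀ j, 0 < b j) (ha1 : ∑ i, a i = 1) (hb1 : ∑ j, b j = 1)
    (hfs : ∀ i, ∑ j, plan C γ fs gs i j = a i) (hgs : ∀ j, ∑ i, plan C γ fs gs i j = b j)
    {k : ℕ} (hk : Even k) (hk2 : 2 ≤ k) :
    (dualObj a b C γ fs gs - dualObj a b C γ (f k) (g k)) ^ 2 ≤
      2 * R ^ 2 / γ * ((dualObj a b C γ fs gs - dualObj a b C γ (f k) (g k)) -
        (dualObj a b C γ fs gs - dualObj a b C γ (f (k + 1)) (g (k + 1)))) := by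
  obtain ⟨m, rfl⟩ : ∃ m, k = m + 2 := ⟨k - 2, by omega⟩
  have hm : Even m := by simpa [Nat.even_add] using hk
  obtain ⟨hf₁, -⟩ := (hiter m).1 hm
  obtain ⟨hf₂, hg₂⟩ := (hiter (m + 1)).2 (Nat.not_even_iff_odd.2 hm.add_one)
  obtain ⟨hf₃, hg₃⟩ := (hiter (m + 2)).1 hk
  have hf : f (m + 2) = sinkhornUpdate a C γ (g m) := hf₂.trans hf₁
  have hg : g (m + 2) = sinkhornUpdate b Cᵀ γ (f (m + 2)) := by rw [hg₂, hf₂]; rfl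
  have hf' : f (m + 2 + 1) = sinkhornUpdate a C γ (g (m + 2)) := hf₃
  have hcol : ∀ j, ∑ i, plan C γ (f (m + 2)) (g (m + 2)) i j = b j := fun j => by
    rw [hg]
    exact sum_plan_sinkhornUpdate_transpose hγ.ne' hb0 _ j
  rw [hf', hg₃, hf]
  rw [hf] at hcol
  exact sq_dualObj_gap_le hγ hC hR ha0 ha1 hb1 hfs hgs hcol

lemma SinkhornSeq.sq_gap_le {f g : ℕ → Fin n → ℝ} (hiter : SinkhornSeq a b C γ f g)
    (hγ : 0 < γ) (hC : ∀ i j, 0 ≤ C i j) (hR : ∀ i j, C i j ≤ R)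
    (ha0 : ∀ i, 0 < a i) (hb0 : ∀ j, 0 < b j) (ha1 : ∑ i, a i = 1) (hb1 : ∑ j, b j = 1)
    (hfs : ∀ i, ∑ j, plan C γ fs gs i j = a i) (hgs : ∀ j, ∑ i, plan C γ fs gs i j = b j)
    {k : ℕ} (hk2 : 2 ≤ k) :
    (dualObj a b C γ fs gs - dualObj a b C γ (f k) (g k)) ^ 2 ≤
      2 * R ^ 2 / γ * ((dualObj a b C γ fs gs - dualObj a b C γ (f k) (g k)) -
        (dualObj a b C γ fs gs - dualObj a b C γ (f (k + 1)) (g (k + 1)))) := by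
  rcases Nat.even_or_odd k with hk | ⟨m, rfl⟩
  · exact hiter.sq_gap_le_of_even hγ hC hR ha0 hb0 ha1 hb1 hfs hgs hk hk2
  · have hfs' : ∀ j, ∑ i, plan Cᵀ γ gs fs i j = a j := by
      simpa only [plan_transpose, Matrix.transpose_apply] using hfs
    have hgs' : ∀ i, ∑ j, plan Cᵀ γ gs fs i j = b i := by
      simpa only [plan_transpose, Matrix.transpose_apply] using hgs
    simpa only [dualObj_transpose] using hiter.transpose.sq_gap_le_of_even hγ
      (fun i j => hC j i) (fun i j => hR j i) hb0 ha0 hb1 ha1 hgs' hfs' (even_two_mul m)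
      (by omega)

end Sinkhorn

/-- **Sublinear convergence of the dual gap for Sinkhorn**: for `k ≥ 3` and any
dual optimal solution `(f*, g*)`,
`h(f*,g*) − h(f_k,g_k) ≤ 2‖C‖_∞² / (γ(k − 2))`. -/
theorem sinkhorn_dual_gap_rate {n : ℕ} (a b : Fin n → ℝ)
    (C : Matrix (Fin n) (Fin n) ℝ) (γ : ℝ) (hγ : 0 < γ)
    (ha0 : ∀ i, 0 < a i) (hb0 : ∀ j, 0 < b j)
    (ha1 : ∑ i, a i = 1) (hb1 : ∑ j, b j = 1)
    (hC : ∀ i j, 0 ≤ C i j)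
    (f g : ℕ → Fin n → ℝ) (hiter : SinkhornSeq a b C γ f g)
    (fs gs : Fin n → ℝ)
    (hfs : ∀ i, ∑ j, plan C γ fs gs i j = a i)
    (hgs : ∀ j, ∑ i, plan C γ fs gs i j = b j)
    (k : ℕ) (hk : 3 ≤ k) :
    dualObj a b C γ fs gs - dualObj a b C γ (f k) (g k) ≤
      2 * (⨆ i, ⨆ j, |C i j|) ^ 2 / (γ * ((k : ℝ) - 2)) := by
  set R := ⨆ i, ⨆ j, |C i j|
  have hR : ∀ i j, C i j ≤ R := fun i j =>
    (le_abs_self _).trans ((le_ciSup (Finite.bddAbove_range _) j).trans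
      (le_ciSup (Finite.bddAbove_range fun i => ⨆ j, |C i j|) i))
  obtain ⟨m, rfl⟩ : ∃ m, k = m + 1 + 2 := ⟨k - 3, by omega⟩
  have hrate := le_div_of_sq_le_mul_sub
    (δ := fun m => dualObj a b C γ fs gs - dualObj a b C γ (f (m + 2)) (g (m + 2)))
    (by positivity)
    (fun m => hiter.sq_gap_le hγ hC hR ha0 hb0 ha1 hb1 hfs hgs (k := m + 2) (by omega)) m
  have hrhs : 2 * R ^ 2 / (γ * (((m + 1 + 2 : ℕ) : ℝ) - 2)) = 2 * R ^ 2 / γ / ((m : ℝ) + 1) := by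
    push_cast
    rw [div_div]
    ring_nf
  rw [hrhs]
  exact hrate
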